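/- arXiv:1805.05325 — 3 statements merged into one kernel-verified Lean document; each statement's English description precedes it below -/
import Mathlib

section
/- Let n ≥ 1 and x ∈ ℝⁿ. Let μ, γ, φ, δφ, Y, σ, w : ℝⁿ → ℝ and u : ℝⁿ → ℝⁿ, with μ and u differentiable at x, and let c ∈ ℝ be a constant. Assume that at the point x: (i) ∇·(μu)(x) − γ(x)φ(x)μ(x) + γ(x)δφ(x) + Y(x) = 0, and (ii) −∇·u(x) + c·σ(x)w(x) − γ(x)φ(x) = 0. Then ∇·(μ²u)(x) − μ(x)²·(3γ(x)φ(x) − c·σ(x)w(x)) + 2μ(x)·(γ(x)δφ(x) + Y(x)) = 0. -/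
/-! By the product rule, `∇·(μ²u) = 2μ ∇·(μu) - μ² ∇·u` (the `∇μ · u` terms cancel), so the
identity is `2μ (i) + μ² (ii)`. -/

open Metric Set
open scoped RealInnerProductSpace

/-- Divergence of a vector field on ℝⁿ at a point: the trace of its Jacobian. -/
noncomputable def vdiv {n : ℕ} (V : EuclideanSpace ℝ (Fin n) → EuclideanSpace ℝ (Fin n))
    (x : EuclideanSpace ℝ (Fin n)) : ℝ :=
  LinearMap.trace ℝ (EuclideanSpace ℝ (Fin n)) (fderiv ℝ V x).toLinearMap

theorem trace_fderiv_smul {𝕜 E : Type*} [NontriviallyNormedField 𝕜] [NormedAddCommGroup E]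
    [NormedSpace 𝕜 E] [FiniteDimensional 𝕜 E] {f : E → 𝕜} {u : E → E} {x : E}
    (hf : DifferentiableAt 𝕜 f x) (hu : DifferentiableAt 𝕜 u x) :
    LinearMap.trace 𝕜 E (fderiv 𝕜 (fun y => f y • u y) x).toLinearMap
      = f x * LinearMap.trace 𝕜 E (fderiv 𝕜 u x).toLinearMap + fderiv 𝕜 f x (u x) := by
  rw [fderiv_fun_smul hf hu, ContinuousLinearMap.toLinearMap_add,
    ContinuousLinearMap.toLinearMap_smul,
    map_add, map_smul, ContinuousLinearMap.coe_smulRight, LinearMap.trace_smulRight,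
    smul_eq_mul]
  rfl

section Divergence

variable {n : ℕ} {x : EuclideanSpace ℝ (Fin n)} {μ : EuclideanSpace ℝ (Fin n) → ℝ}
  {u : EuclideanSpace ℝ (Fin n) → EuclideanSpace ℝ (Fin n)}

theorem vdiv_smul (hμ : DifferentiableAt ℝ μ x) (hu : DifferentiableAt ℝ u x) :
    vdiv (fun y => μ y • u y) x = μ x * vdiv u x + fderiv ℝ μ x (u x) :=
  trace_fderiv_smul hμ hu

theorem vdiv_sq_smul (hμ : DifferentiableAt ℝ μ x) (hu : DifferentiableAt ℝ u x) :
    vdiv (fun y => μ y ^ 2 • u y) x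
      = 2 * μ x * vdiv (fun y => μ y • u y) x - μ x ^ 2 * vdiv u x := by
  have hsq : (fun y => μ y ^ 2 • u y) = fun y => μ y • (μ y • u y) := by
    funext y
    rw [smul_smul, sq]
  rw [hsq, vdiv_smul (u := fun y => μ y • u y) hμ (hμ.smul hu), vdiv_smul hμ hu, map_smul, smul_eq_mul]
  ring

end Divergence

theorem stmt_1_general {n : ℕ} (x : EuclideanSpace ℝ (Fin n))
    (μ γ φ δφ Y σ w : EuclideanSpace ℝ (Fin n) → ℝ)
    (u : EuclideanSpace ℝ (Fin n) → EuclideanSpace ℝ (Fin n)) (c : ℝ)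
    (hμ : DifferentiableAt ℝ μ x) (hu : DifferentiableAt ℝ u x)
    (h1 : vdiv (fun y => μ y • u y) x - γ x * φ x * μ x + γ x * δφ x + Y x = 0)
    (h2 : -vdiv u x + c * (σ x * w x) - γ x * φ x = 0) :
    vdiv (fun y => (μ y) ^ 2 • u y) x
      - (μ x) ^ 2 * (3 * (γ x * φ x) - c * (σ x * w x))
      + 2 * μ x * (γ x * δφ x + Y x) = 0 := by
  rw [vdiv_sq_smul hμ hu]
  linear_combination 2 * μ x * h1 + μ x ^ 2 * h2

/-- (Renorm-2): the renormalized identity obtained from (Renorm-1) using the pointwise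
forms of the linearized and background first simplified P₂ equations. -/
theorem stmt_1 {n : ℕ} (hn : 1 ≤ n) (x : EuclideanSpace ℝ (Fin n))
    (μ γ φ δφ Y σ w : EuclideanSpace ℝ (Fin n) → ℝ)
    (u : EuclideanSpace ℝ (Fin n) → EuclideanSpace ℝ (Fin n)) (c : ℝ)
    (hμ : DifferentiableAt ℝ μ x) (hu : DifferentiableAt ℝ u x)
    (h1 : vdiv (fun y => μ y • u y) x - γ x * φ x * μ x + γ x * δφ x + Y x = 0)
    (h2 : -vdiv u x + c * (σ x * w x) - γ x * φ x = 0) :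
    vdiv (fun y => (μ y) ^ 2 • u y) x
      - (μ x) ^ 2 * (3 * (γ x * φ x) - c * (σ x * w x))
      + 2 * μ x * (γ x * δφ x + Y x) = 0 :=
  stmt_1_general x μ γ φ δφ Y σ w u c hμ hu h1 h2
end

section
/- Let Ω ⊆ ℝⁿ be open, let κ, κ' > 0 be constants, let D : Ω → ℝ be of class C¹ with D(x) > 0 for all x, let σ_a, δσ_a, w : Ω → ℝ, and let δw, δφ₂ : Ω → ℝ be of class C² satisfying on Ω the linearized simplified P₂ system: −∇·(D∇δw) + (1 + 4/(9κ))σ_a δw − (10/(27κ'))(1/D)δφ₂ = −(1 + 4/(9κ)) w δσ_a and −∇·(D∇δφ₂) + (5/(9κ'))(1/D)δφ₂ − (2/(3κ))σ_a δw = (2/(3κ)) w δσ_a. Assume in addition that δw(x) = 0 for all x ∈ Ω. Then for every x ∈ Ω: (i) δσ_a(x)·w(x) = (10κ/(3κ'(9κ + 4)))·δφ₂(x)/D(x); (ii) −∇·(D∇δφ₂)(x) + (5κ/((9κ + 4)κ'))·(1/D(x))·δφ₂(x) = 0, and the coefficient (5κ/((9κ + 4)κ'))·(1/D(x)) is strictly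 positive. -/
open Metric Set
open scoped RealInnerProductSpace

/-- Key algebraic step in the injectivity proof for δσa ↦ δw: if δw vanishes identically,
then δσa·w is proportional to δφ₂, and δφ₂ solves a single elliptic equation with strictly
positive zeroth-order coefficient. -/
theorem stmt_7 {n : ℕ} (Ω : Set (EuclideanSpace ℝ (Fin n))) (hΩ : IsOpen Ω)
    (κ κ' : ℝ) (hκ : 0 < κ) (hκ' : 0 < κ')
    (D σa δσa w : EuclideanSpace ℝ (Fin n) → ℝ)
    (hD : ContDiffOn ℝ 1 D Ω) (hD0 : ∀ x ∈ Ω, 0 < D x)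
    (δw δφ₂ : EuclideanSpace ℝ (Fin n) → ℝ)
    (hδw : ContDiffOn ℝ 2 δw Ω) (hδφ₂ : ContDiffOn ℝ 2 δφ₂ Ω)
    (h1 : ∀ x ∈ Ω, -vdiv (fun y => D y • gradient δw y) x
        + (1 + 4 / (9 * κ)) * (σa x * δw x) - 10 / (27 * κ') * (1 / D x) * δφ₂ x
        = -((1 + 4 / (9 * κ)) * (w x * δσa x)))
    (h2 : ∀ x ∈ Ω, -vdiv (fun y => D y • gradient δφ₂ y) x
        + 5 / (9 * κ') * (1 / D x) * δφ₂ x - 2 / (3 * κ) * (σa x * δw x)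
        = 2 / (3 * κ) * (w x * δσa x))
    (hzero : ∀ x ∈ Ω, δw x = 0) :
    ∀ x ∈ Ω,
      (δσa x * w x = 10 * κ / (3 * κ' * (9 * κ + 4)) * (δφ₂ x / D x)) ∧
      (-vdiv (fun y => D y • gradient δφ₂ y) x
          + 5 * κ / ((9 * κ + 4) * κ') * (1 / D x) * δφ₂ x = 0) ∧
      (0 < 5 * κ / ((9 * κ + 4) * κ') * (1 / D x)) := by
  intro x hx
  have hDx := hD0 x hx
  -- gradient of δw vanishes on Ω
  have hgrad : ∀ y ∈ Ω, gradient δw y = 0 := by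
    intro y hy
    have heq : δw =ᶠ[nhds y] (fun _ => (0:ℝ)) := by
      filter_upwards [hΩ.mem_nhds hy] with z hz using hzero z hz
    have hfd : fderiv ℝ δw y = 0 := by
      rw [heq.fderiv_eq]; exact fderiv_const_apply 0
    simp [gradient, hfd]
  -- the vector field D • ∇δw vanishes near x
  have hVeq : (fun y => D y • gradient δw y) =ᶠ[nhds x] (fun _ => (0:EuclideanSpace ℝ (Fin n))) := by
    filter_upwards [hΩ.mem_nhds hx] with z hz
    rw [hgrad z hz, smul_zero]
  have hdiv0 : vdiv (fun y => D y • gradient δw y) x = 0 := by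
    have hfd : fderiv ℝ (fun y => D y • gradient δw y) x = 0 := by
      rw [hVeq.fderiv_eq]; exact fderiv_const_apply 0
    simp [vdiv, hfd]
  have e1 := h1 x hx
  have e2 := h2 x hx
  rw [hdiv0] at e1
  rw [hzero x hx] at e1 e2
  have hκn : (κ:ℝ) ≠ 0 := ne_of_gt hκ
  have hκ'n : (κ':ℝ) ≠ 0 := ne_of_gt hκ'
  have hDn : D x ≠ 0 := ne_of_gt hDx
  have key : δσa x * w x = 10 * κ / (3 * κ' * (9 * κ + 4)) * (δφ₂ x / D x) := by
    have h94 : (9*κ + 4) ≠ 0 := by positivity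
    field_simp at e1 ⊢
    nlinarith [e1, sq_nonneg κ]
  refine ⟨key, ?_, by positivity⟩
  have h94 : (9*κ + 4) ≠ 0 := by positivity
  have : 2 / (3 * κ) * (w x * δσa x) = 20 / (9 * κ' * (9*κ+4)) * (δφ₂ x / D x) := by
    rw [mul_comm (w x) (δσa x), key]; field_simp; ring
  rw [this] at e2
  have hc : 5 * κ / ((9 * κ + 4) * κ') * (1 / D x) * δφ₂ x
      = 5 / (9 * κ') * (1 / D x) * δφ₂ x - 20 / (9 * κ' * (9 * κ + 4)) * (δφ₂ x / D x) := by
    field_simp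
    ring
  rw [hc]
  linarith [e2]
end

section
/- Let Ω = B(x₀, r) ⊂ ℝ³ be an open ball and κ, κ' > 0 constants. Let D be of class C¹ and strictly positive on an open neighborhood of the closure of Ω, let σ_a be continuous on the closure, and let w be continuous with w(x) ≠ 0 for every x ∈ Ω. Let δσ_a and δσ̃_a be continuous on Ω, and let (δw, δφ₂) and (δw̃, δφ̃₂) be of class C² on an open neighborhood of the closure of Ω, each satisfying in Ω the linearized simplified P₂ system: −∇·(D∇δw) + (1 + 4/(9κ))σ_a δw − (10/(27κ'))(1/D)δφ₂ = −(1 + 4/(9κ)) w δσ_a and −∇·(D∇δφ₂) + (5/(9κ'))(1/D)δφ₂ − (2/(3κ))σ_a δw = (2/(3κ)) w δσ_a (with δσ̃_a in place of δσ_a for the tilde pair), together with the boundary condition n·(D∇δφ₂) + (5/(24κ))δφ₂ − (1/(8κ))δw = 0 on ∂Ω (likewise for the tilde quantities). If δw = δw̃ on the closure of Ω, then δσ_a = δσ̃_a on Ω. -/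
open Metric Set
open scoped RealInnerProductSpace

/-- The linearized (in the absorption coefficient) simplified P₂ system on Ω. -/
def LinSP2a {n : ℕ} (Ω : Set (EuclideanSpace ℝ (Fin n))) (κ κ' : ℝ)
    (D σa w δσa δw δφ₂ : EuclideanSpace ℝ (Fin n) → ℝ) : Prop :=
  ∀ x ∈ Ω,
    (-vdiv (fun y => D y • gradient δw y) x
        + (1 + 4 / (9 * κ)) * (σa x * δw x) - 10 / (27 * κ') * (1 / D x) * δφ₂ x
        = -((1 + 4 / (9 * κ)) * (w x * δσa x))) ∧
    (-vdiv (fun y => D y • gradient δφ₂ y) x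
        + 5 / (9 * κ') * (1 / D x) * δφ₂ x - 2 / (3 * κ) * (σa x * δw x)
        = 2 / (3 * κ) * (w x * δσa x))

open Filter Topology InnerProductSpace
open scoped Gradient

/-!
Put `u = δφ₂ - δφ₂'`. Subtracting the two systems, the first equation expresses
`w (δσa - δσa')` as a multiple of `u / D`; substituting it into the second gives
`∇·(D∇u) = γ u / D` in the ball, with `γ = 5κ / (κ' (9κ + 4)) > 0`, and the boundary conditions
give the Robin condition `n·(D∇u) + 5/(24κ) u = 0`. A positive maximum of `u` on the closed ball
is impossible: at an interior maximum `∇u = 0`, so `∇·(D∇u) = D Δu ≤ 0` while `γ u / D > 0`;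
at a maximum on the sphere the outward derivative is `≥ 0`, contradicting the Robin condition.
So `u ≤ 0`, by symmetry `u = 0`, and the first equation then forces `w (δσa - δσa') = 0`.
-/

theorem IsLocalMax.nonpos_of_hasDerivAt_deriv {g g' : ℝ → ℝ} {x a : ℝ} (hmax : IsLocalMax g x)
    (hg : ∀ᶠ t in 𝓝 x, HasDerivAt g (g' t) t) (hg' : HasDerivAt g' a x) : a ≤ 0 := by
  by_contra! ha
  have hderiv : deriv g =ᶠ[𝓝 x] g' := hg.mono fun t ht => ht.deriv
  have hcrit : g' x = 0 := hmax.hasDerivAt_eq_zero hg.self_of_nhds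
  -- a positive second derivative makes the maximum a minimum too, so `g` is locally constant
  have hmin : IsLocalMin g x :=
    isLocalMin_of_deriv_deriv_pos (by rwa [hderiv.deriv_eq, hg'.deriv])
      (by rw [hderiv.eq_of_nhds, hcrit]) hg.self_of_nhds.continuousAt
  have hconst : ∀ᶠ t in 𝓝 x, g t = g x := (hmax.and hmin).mono fun t ht => le_antisymm ht.1 ht.2
  have hg'_zero : g' =ᶠ[𝓝 x] fun _ => 0 := by
    filter_upwards [hconst.eventually_nhds, hg] with t ht hgt
    exact hgt.unique ((hasDerivAt_const t (g x)).congr_of_eventuallyEq ht)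
  exact ha.ne' ((hg'.congr_of_eventuallyEq hg'_zero.symm).unique (hasDerivAt_const x 0))

theorem ContDiffOn.contDiffAt_of_subset_isOpen {E F : Type*} [NormedAddCommGroup E]
    [NormedSpace ℝ E] [NormedAddCommGroup F] [NormedSpace ℝ F] {f : E → F} {s U : Set E}
    {n : WithTop ℕ∞} (hf : ContDiffOn ℝ n f U) (hU : IsOpen U) (hsU : s ⊆ U) :
    ∀ x ∈ s, ContDiffAt ℝ n f x :=
  fun _ hx => hf.contDiffAt (hU.mem_nhds (hsU hx))

theorem ContDiffAt.eventually_differentiableAt {E F : Type*} [NormedAddCommGroup E]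
    [NormedSpace ℝ E] [NormedAddCommGroup F] [NormedSpace ℝ F] {f : E → F} {x : E}
    {n : WithTop ℕ∞} (hf : ContDiffAt ℝ n f x) (hn : 1 ≤ n) :
    ∀ᶠ y in 𝓝 x, DifferentiableAt ℝ f y := by
  obtain ⟨u, hu, hfu⟩ := hf.contDiffOn hn (by simp)
  exact (hfu.differentiableOn one_ne_zero).eventually_differentiableAt hu

section Gradient

variable {F : Type*} [NormedAddCommGroup F] [InnerProductSpace ℝ F] [CompleteSpace F]

theorem ContDiffAt.gradient {v : F → ℝ} {z : F} {m n : WithTop ℕ∞} (hv : ContDiffAt ℝ n v z)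
    (hmn : m + 1 ≤ n) : ContDiffAt ℝ m (∇ v) z :=
  (toDual ℝ F).symm.contDiff.contDiffAt.comp z (hv.fderiv_right hmn)

theorem gradient_fun_sub {v₁ v₂ : F → ℝ} {z : F} (h₁ : DifferentiableAt ℝ v₁ z)
    (h₂ : DifferentiableAt ℝ v₂ z) : ∇ (fun y => v₁ y - v₂ y) z = ∇ v₁ z - ∇ v₂ z := by
  simp only [gradient, fderiv_fun_sub h₁ h₂, map_sub]

theorem IsLocalMax.inner_fderiv_gradient_self_nonpos {v : F → ℝ} {z : F} (hmax : IsLocalMax v z)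
    (hv : ContDiffAt ℝ 2 v z) (e : F) : ⟪fderiv ℝ (∇ v) z e, e⟫ ≤ 0 := by
  have hline : ∀ t : ℝ, HasDerivAt (fun s : ℝ => z + s • e) e t := fun t => by
    simpa using ((hasDerivAt_id t).smul_const e).const_add z
  have hmax_line : IsLocalMax (fun t : ℝ => v (z + t • e)) 0 :=
    IsLocalMax.comp_continuous (f := v) (by simpa using hmax) (hline 0).continuousAt
  have hdiff : ∀ᶠ t in 𝓝 (0 : ℝ), DifferentiableAt ℝ v (z + t • e) :=
    (hline 0).continuousAt.eventually (by simpa using hv.eventually_differentiableAt (by norm_num))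
  refine hmax_line.nonpos_of_hasDerivAt_deriv (g' := fun t => ⟪∇ v (z + t • e), e⟫) ?_ ?_
  · filter_upwards [hdiff] with t ht
    rw [inner_gradient_left]
    exact ht.hasFDerivAt.comp_hasDerivAt t (hline t)
  · have hG : HasFDerivAt (∇ v) (fderiv ℝ (∇ v) z) z :=
      ((hv.gradient (m := 1) (by norm_num)).differentiableAt one_ne_zero).hasFDerivAt
    simpa using (hG.comp_hasDerivAt_of_eq 0 (hline 0) (by simp)).inner ℝ (hasDerivAt_const 0 e)

theorem IsMaxOn.inner_gradient_sub_nonpos {v : F → ℝ} {s : Set F} {z y : F}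
    (hmax : IsMaxOn v s z) (hv : DifferentiableAt ℝ v z) (hs : segment ℝ z y ⊆ s) :
    ⟪∇ v z, y - z⟫ ≤ 0 := by
  rw [inner_gradient_left]
  exact hmax.localize.hasFDerivWithinAt_nonpos hv.hasFDerivAt.hasFDerivWithinAt
    (sub_mem_posTangentConeAt_of_segment_subset hs)

end Gradient

section Divergence

variable {n : ℕ}

local notation "E" => EuclideanSpace ℝ (Fin n)

theorem Filter.EventuallyEq.vdiv_eq {V₁ V₂ : E → E} {x : E} (h : V₁ =ᶠ[𝓝 x] V₂) :
    vdiv V₁ x = vdiv V₂ x := by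
  rw [vdiv, vdiv, h.fderiv_eq]

theorem vdiv_fun_sub {V₁ V₂ : E → E} {x : E} (h₁ : DifferentiableAt ℝ V₁ x)
    (h₂ : DifferentiableAt ℝ V₂ x) : vdiv (fun y => V₁ y - V₂ y) x = vdiv V₁ x - vdiv V₂ x := by
  rw [vdiv, vdiv, vdiv, fderiv_fun_sub h₁ h₂, ContinuousLinearMap.toLinearMap_sub, map_sub]

theorem vdiv_smul_of_eq_zero {D : E → ℝ} {V : E → E} {x : E} (hD : DifferentiableAt ℝ D x)
    (hV : DifferentiableAt ℝ V x) (hx : V x = 0) :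
    vdiv (fun y => D y • V y) x = D x * vdiv V x := by
  rw [vdiv, vdiv, fderiv_fun_smul hD hV, hx]
  simp

theorem IsLocalMax.vdiv_gradient_nonpos {v : E → ℝ} {z : E} (hmax : IsLocalMax v z)
    (hv : ContDiffAt ℝ 2 v z) : vdiv (∇ v) z ≤ 0 := by
  rw [vdiv, LinearMap.trace_eq_sum_inner _ (EuclideanSpace.basisFun (Fin n) ℝ)]
  refine Finset.sum_nonpos fun i _ => ?_
  rw [real_inner_comm]
  exact hmax.inner_fderiv_gradient_self_nonpos hv _

theorem vdiv_smul_gradient_sub {D v₁ v₂ : E → ℝ} {x : E} (hD : DifferentiableAt ℝ D x)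
    (h₁ : ContDiffAt ℝ 2 v₁ x) (h₂ : ContDiffAt ℝ 2 v₂ x) :
    vdiv (fun y => D y • ∇ (fun y => v₁ y - v₂ y) y) x
      = vdiv (fun y => D y • ∇ v₁ y) x - vdiv (fun y => D y • ∇ v₂ y) x := by
  have hfield : (fun y => D y • ∇ (fun y => v₁ y - v₂ y) y)
      =ᶠ[𝓝 x] fun y => D y • ∇ v₁ y - D y • ∇ v₂ y := by
    filter_upwards [h₁.eventually_differentiableAt (by norm_num),
      h₂.eventually_differentiableAt (by norm_num)] with y hy₁ hy₂
    rw [gradient_fun_sub hy₁ hy₂, smul_sub]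
  rw [hfield.vdiv_eq]
  exact vdiv_fun_sub (hD.smul ((h₁.gradient (m := 1) (by norm_num)).differentiableAt one_ne_zero))
    (hD.smul ((h₂.gradient (m := 1) (by norm_num)).differentiableAt one_ne_zero))

theorem nonpos_of_vdiv_smul_gradient_eq_mul_of_robin {x₀ : E} {r β : ℝ} (hβ : 0 < β)
    {D q v : E → ℝ} (hD : ∀ x ∈ ball x₀ r, DifferentiableAt ℝ D x)
    (hD_nonneg : ∀ x ∈ closedBall x₀ r, 0 ≤ D x) (hq : ∀ x ∈ ball x₀ r, 0 < q x)
    (hv : ∀ x ∈ closedBall x₀ r, ContDiffAt ℝ 2 v x)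
    (heq : ∀ x ∈ ball x₀ r, vdiv (fun y => D y • ∇ v y) x = q x * v x)
    (hbc : ∀ x ∈ sphere x₀ r, ⟪r⁻¹ • (x - x₀), D x • ∇ v x⟫ + β * v x = 0) :
    ∀ x ∈ closedBall x₀ r, v x ≤ 0 := by
  intro x hx
  obtain ⟨z, hz, hmax⟩ := (isCompact_closedBall x₀ r).exists_isMaxOn ⟨x, hx⟩
    fun y hy => (hv y hy).continuousAt.continuousWithinAt
  refine (hmax hx).trans ?_
  rcases (mem_closedBall.1 hz).lt_or_eq with hz_ball | hz_sphere
  · have hloc : IsLocalMax v z :=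
      hmax.isLocalMax (mem_of_superset (isOpen_ball.mem_nhds hz_ball) ball_subset_closedBall)
    have hcrit : ∇ v z = 0 := by rw [gradient, hloc.fderiv_eq_zero, map_zero]
    have hdiv : vdiv (fun y => D y • ∇ v y) z ≤ 0 := by
      rw [vdiv_smul_of_eq_zero (hD z hz_ball)
        (((hv z hz).gradient (m := 1) (by norm_num)).differentiableAt one_ne_zero) hcrit]
      exact mul_nonpos_of_nonneg_of_nonpos (hD_nonneg z hz) (hloc.vdiv_gradient_nonpos (hv z hz))
    rw [heq z hz_ball] at hdiv
    exact nonpos_of_mul_nonpos_right hdiv (hq z hz_ball)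
  · have hr : 0 ≤ r := hz_sphere ▸ dist_nonneg
    have hinward : ⟪∇ v z, x₀ - z⟫ ≤ 0 :=
      hmax.inner_gradient_sub_nonpos ((hv z hz).differentiableAt (by norm_num))
        ((convex_closedBall x₀ r).segment_subset hz (mem_closedBall_self hr))
    have hflux : 0 ≤ ⟪r⁻¹ • (z - x₀), D z • ∇ v z⟫ := by
      rw [real_inner_smul_left, real_inner_smul_right, real_inner_comm, ← neg_sub,
        inner_neg_right]
      exact mul_nonneg (inv_nonneg.2 hr) (mul_nonneg (hD_nonneg z hz) (by linarith))
    have hβv := hbc z hz_sphere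
    exact nonpos_of_mul_nonpos_right (by linarith) hβ

end Divergence

section LinSP2a

variable {n : ℕ} {κ κ' : ℝ} {D σa w δσa δσa' δw δφ₂ δw' δφ₂' : EuclideanSpace ℝ (Fin n) → ℝ}

theorem LinSP2a.mul_sub_absorption_eq {Ω : Set (EuclideanSpace ℝ (Fin n))}
    (hsys : LinSP2a Ω κ κ' D σa w δσa δw δφ₂) (hsys' : LinSP2a Ω κ κ' D σa w δσa' δw' δφ₂')
    (hΩ : IsOpen Ω) (hδw : EqOn δw δw' Ω) {x : EuclideanSpace ℝ (Fin n)} (hx : x ∈ Ω) :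
    (1 + 4 / (9 * κ)) * (w x * (δσa x - δσa' x))
      = 10 / (27 * κ') * (1 / D x) * (δφ₂ x - δφ₂' x) := by
  have hdiv : vdiv (fun y => D y • ∇ δw y) x = vdiv (fun y => D y • ∇ δw' y) x :=
    Filter.EventuallyEq.vdiv_eq <| (hδw.eventuallyEq_of_mem (hΩ.mem_nhds hx)).gradient.mono
      fun y hy => by simp only [hy]
  obtain ⟨h₁, -⟩ := hsys x hx
  obtain ⟨h₁', -⟩ := hsys' x hx
  rw [hdiv, hδw hx] at h₁
  linear_combination h₁ - h₁'

theorem LinSP2a.vdiv_smul_gradient_sub_eq {Ω : Set (EuclideanSpace ℝ (Fin n))} (hκ : 0 < κ)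
    (hκ' : κ' ≠ 0) (hsys : LinSP2a Ω κ κ' D σa w δσa δw δφ₂)
    (hsys' : LinSP2a Ω κ κ' D σa w δσa' δw' δφ₂') (hΩ : IsOpen Ω) (hδw : EqOn δw δw' Ω)
    {x : EuclideanSpace ℝ (Fin n)} (hx : x ∈ Ω) (hD : DifferentiableAt ℝ D x)
    (hφ : ContDiffAt ℝ 2 δφ₂ x) (hφ' : ContDiffAt ℝ 2 δφ₂' x) :
    vdiv (fun y => D y • ∇ (fun y => δφ₂ y - δφ₂' y) y) x
      = 5 * κ / (κ' * (9 * κ + 4)) / D x * (δφ₂ x - δφ₂' x) := by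
  have habs := hsys.mul_sub_absorption_eq hsys' hΩ hδw hx
  obtain ⟨-, h₂⟩ := hsys x hx
  obtain ⟨-, h₂'⟩ := hsys' x hx
  rw [hδw hx] at h₂
  have hW : w x * (δσa x - δσa' x)
      = 10 / (27 * κ') * (1 / D x) * (δφ₂ x - δφ₂' x) / (1 + 4 / (9 * κ)) :=
    eq_div_of_mul_eq (by positivity) (by rw [mul_comm, habs])
  have hcoef : 5 / (9 * κ') - 2 / (3 * κ) * (10 / (27 * κ')) / (1 + 4 / (9 * κ))
      = 5 * κ / (κ' * (9 * κ + 4)) := by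
    have h9 : 9 * κ + 4 ≠ 0 := by positivity
    field_simp
    ring
  rw [vdiv_smul_gradient_sub hD hφ hφ', div_eq_mul_one_div _ (D x), ← hcoef]
  linear_combination h₂' - h₂ - 2 / (3 * κ) * hW

theorem LinSP2a.sub_nonpos_of_robin {x₀ : EuclideanSpace ℝ (Fin n)} {r : ℝ} (hκ : 0 < κ)
    (hκ' : 0 < κ') (hD : ∀ x ∈ ball x₀ r, DifferentiableAt ℝ D x)
    (hD_pos : ∀ x ∈ closedBall x₀ r, 0 < D x) (hφ : ∀ x ∈ closedBall x₀ r, ContDiffAt ℝ 2 δφ₂ x)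
    (hφ' : ∀ x ∈ closedBall x₀ r, ContDiffAt ℝ 2 δφ₂' x)
    (hsys : LinSP2a (ball x₀ r) κ κ' D σa w δσa δw δφ₂)
    (hsys' : LinSP2a (ball x₀ r) κ κ' D σa w δσa' δw' δφ₂')
    (hbc : ∀ x ∈ sphere x₀ r,
      ⟪r⁻¹ • (x - x₀), D x • ∇ δφ₂ x⟫ + 5 / (24 * κ) * δφ₂ x - 1 / (8 * κ) * δw x = 0)
    (hbc' : ∀ x ∈ sphere x₀ r,
      ⟪r⁻¹ • (x - x₀), D x • ∇ δφ₂' x⟫ + 5 / (24 * κ) * δφ₂' x - 1 / (8 * κ) * δw' x = 0)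
    (hδw : EqOn δw δw' (closedBall x₀ r)) :
    ∀ x ∈ closedBall x₀ r, δφ₂ x - δφ₂' x ≤ 0 := by
  have hγ : 0 < 5 * κ / (κ' * (9 * κ + 4)) := by positivity
  refine nonpos_of_vdiv_smul_gradient_eq_mul_of_robin (β := 5 / (24 * κ)) (by positivity) hD
    (fun x hx => (hD_pos x hx).le)
    (fun x hx => div_pos hγ (hD_pos x (ball_subset_closedBall hx)))
    (fun x hx => (hφ x hx).sub (hφ' x hx)) (fun x hx => ?_) (fun x hx => ?_)
  · have hx' := ball_subset_closedBall hx
    exact hsys.vdiv_smul_gradient_sub_eq hκ hκ'.ne' hsys' isOpen_ball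
      (hδw.mono ball_subset_closedBall) hx (hD x hx) (hφ x hx') (hφ' x hx')
  · have hx' := sphere_subset_closedBall hx
    have hb := hbc x hx
    have hb' := hbc' x hx
    rw [hδw hx'] at hb
    rw [gradient_fun_sub ((hφ x hx').differentiableAt (by norm_num))
      ((hφ' x hx').differentiableAt (by norm_num)), smul_sub (D x), inner_sub_right]
    linear_combination hb - hb'

end LinSP2a

theorem stmt_8_general (x₀ : EuclideanSpace ℝ (Fin 3)) (r : ℝ)
    (κ κ' : ℝ) (hκ : 0 < κ) (hκ' : 0 < κ')
    (D σa w : EuclideanSpace ℝ (Fin 3) → ℝ)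
    (hD : ∃ U, IsOpen U ∧ closedBall x₀ r ⊆ U ∧ ContDiffOn ℝ 1 D U ∧ ∀ x ∈ U, 0 < D x)
    (hw0 : ∀ x ∈ ball x₀ r, w x ≠ 0)
    (δσa δσa' : EuclideanSpace ℝ (Fin 3) → ℝ)
    (δw δφ₂ δw' δφ₂' : EuclideanSpace ℝ (Fin 3) → ℝ)
    (hreg : ∃ U, IsOpen U ∧ closedBall x₀ r ⊆ U ∧ ContDiffOn ℝ 2 δw U ∧ ContDiffOn ℝ 2 δφ₂ U)
    (hreg' : ∃ U, IsOpen U ∧ closedBall x₀ r ⊆ U ∧ ContDiffOn ℝ 2 δw' U ∧ ContDiffOn ℝ 2 δφ₂' U)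
    (hsys : LinSP2a (ball x₀ r) κ κ' D σa w δσa δw δφ₂)
    (hsys' : LinSP2a (ball x₀ r) κ κ' D σa w δσa' δw' δφ₂')
    (hbc : ∀ x ∈ sphere x₀ r,
      ⟪r⁻¹ • (x - x₀), D x • gradient δφ₂ x⟫ + 5 / (24 * κ) * δφ₂ x - 1 / (8 * κ) * δw x = 0)
    (hbc' : ∀ x ∈ sphere x₀ r,
      ⟪r⁻¹ • (x - x₀), D x • gradient δφ₂' x⟫ + 5 / (24 * κ) * δφ₂' x - 1 / (8 * κ) * δw' x = 0)
    (hδw : ∀ x ∈ closedBall x₀ r, δw x = δw' x) :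
    ∀ x ∈ ball x₀ r, δσa x = δσa' x := by
  obtain ⟨U, hU, hBU, hD_smooth, hD_pos⟩ := hD
  obtain ⟨U₁, hU₁, hBU₁, -, hφ⟩ := hreg
  obtain ⟨U₂, hU₂, hBU₂, -, hφ'⟩ := hreg'
  have hD_diff : ∀ x ∈ ball x₀ r, DifferentiableAt ℝ D x := fun x hx =>
    (hD_smooth.contDiffAt_of_subset_isOpen hU (ball_subset_closedBall.trans hBU) x hx)
      |>.differentiableAt one_ne_zero
  have hD_pos' : ∀ x ∈ closedBall x₀ r, 0 < D x := fun x hx => hD_pos x (hBU hx)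
  have hδw : EqOn δw δw' (closedBall x₀ r) := hδw
  have hφ := hφ.contDiffAt_of_subset_isOpen hU₁ hBU₁
  have hφ' := hφ'.contDiffAt_of_subset_isOpen hU₂ hBU₂
  have hle := hsys.sub_nonpos_of_robin hκ hκ' hD_diff hD_pos' hφ hφ' hsys' hbc hbc' hδw
  have hge := hsys'.sub_nonpos_of_robin hκ hκ' hD_diff hD_pos' hφ' hφ hsys hbc' hbc hδw.symm
  intro x hx
  have habs := hsys.mul_sub_absorption_eq hsys' isOpen_ball (hδw.mono ball_subset_closedBall) hx
  have hx' := ball_subset_closedBall hx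
  rw [show δφ₂ x - δφ₂' x = 0 by linarith [hle x hx', hge x hx'], mul_zero] at habs
  have ha : 1 + 4 / (9 * κ) ≠ 0 := by positivity
  simpa [ha, hw0 x hx, sub_eq_zero] using habs

/-- Injectivity of the linearized reconstruction of the absorption coefficient:
δw determines δσa wherever the background solution w does not vanish. -/
theorem stmt_8 (x₀ : EuclideanSpace ℝ (Fin 3)) (r : ℝ) (hr : 0 < r)
    (κ κ' : ℝ) (hκ : 0 < κ) (hκ' : 0 < κ')
    (D σa w : EuclideanSpace ℝ (Fin 3) → ℝ)
    (hD : ∃ U, IsOpen U ∧ closedBall x₀ r ⊆ U ∧ ContDiffOn ℝ 1 D U ∧ ∀ x ∈ U, 0 < D x)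
    (hσ : ContinuousOn σa (closedBall x₀ r))
    (hw : ContinuousOn w (ball x₀ r)) (hw0 : ∀ x ∈ ball x₀ r, w x ≠ 0)
    (δσa δσa' : EuclideanSpace ℝ (Fin 3) → ℝ)
    (hδσ : ContinuousOn δσa (ball x₀ r)) (hδσ' : ContinuousOn δσa' (ball x₀ r))
    (δw δφ₂ δw' δφ₂' : EuclideanSpace ℝ (Fin 3) → ℝ)
    (hreg : ∃ U, IsOpen U ∧ closedBall x₀ r ⊆ U ∧ ContDiffOn ℝ 2 δw U ∧ ContDiffOn ℝ 2 δφ₂ U)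
    (hreg' : ∃ U, IsOpen U ∧ closedBall x₀ r ⊆ U ∧ ContDiffOn ℝ 2 δw' U ∧ ContDiffOn ℝ 2 δφ₂' U)
    (hsys : LinSP2a (ball x₀ r) κ κ' D σa w δσa δw δφ₂)
    (hsys' : LinSP2a (ball x₀ r) κ κ' D σa w δσa' δw' δφ₂')
    (hbc : ∀ x ∈ sphere x₀ r,
      ⟪r⁻¹ • (x - x₀), D x • gradient δφ₂ x⟫ + 5 / (24 * κ) * δφ₂ x - 1 / (8 * κ) * δw x = 0)
    (hbc' : ∀ x ∈ sphere x₀ r,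
      ⟪r⁻¹ • (x - x₀), D x • gradient δφ₂' x⟫ + 5 / (24 * κ) * δφ₂' x - 1 / (8 * κ) * δw' x = 0)
    (hδw : ∀ x ∈ closedBall x₀ r, δw x = δw' x) :
    ∀ x ∈ ball x₀ r, δσa x = δσa' x :=
  stmt_8_general x₀ r κ κ' hκ hκ' D σa w hD hw0 δσa δσa' δw δφ₂ δw' δφ₂' hreg hreg' hsys hsys' hbc
    hbc' hδw
end
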